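/- In type \(C_n\), the \(i\)-th row of the tableau \(T(C_n)\), namely \(H_{\beta_i} = \{t_{i,j} \mid i \le j \le 2n-i\}\), equals the set of positive roots \(\alpha\) with \((\alpha, \beta_i) > 0\) lying in the root subsystem orthogonal to \(\beta_1,\dots,\beta_{i-1}\), and it is a Heisenberg set of centre \(\beta_i = t_{i,i}\). -/

import Mathlib

/-- The standard basis vector `eᵢ` of `ℝ^∞` (1-based indexing). -/
noncomputable def e (i : ℕ) : ℕ → ℝ := fun m => if m = i then 1 else 0

/-- The standard inner product (on vectors supported in `{0,…,n}`). -/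
noncomputable def dotN (n : ℕ) (x y : ℕ → ℝ) : ℝ := ∑ m ∈ Finset.range (n + 1), x m * y m

/-- The simple roots of type `Cₙ`: `αᵢ = eᵢ - eᵢ₊₁` for `i < n` and `αₙ = 2eₙ`. -/
noncomputable def alC (n i : ℕ) : ℕ → ℝ := if i = n then (2 : ℝ) • e n else e i - e (i + 1)

/-- The entry `t_{i,j}` of the shifted tableau `T(Cₙ)`.  In particular the cascade root
`βᵢ` is `t_{i,i} = 2αᵢ + ⋯ + 2α_{n-1} + αₙ`. -/
noncomputable def tC (n i j : ℕ) : ℕ → ℝ :=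
  if j ≤ n - 1 then
    (∑ m ∈ Finset.Ico i j, alC n m) + (2 : ℝ) • (∑ m ∈ Finset.Ico j n, alC n m) + alC n n
  else
    ∑ m ∈ Finset.Icc i (2 * n - j), alC n m

/-- The root system of type `Cₙ`. -/
def DeltaC (n : ℕ) : Set (ℕ → ℝ) :=
  {v | ∃ i j, 1 ≤ i ∧ i ≤ n ∧ 1 ≤ j ∧ j ≤ n ∧
    ((i ≠ j ∧ v = e i - e j) ∨ v = e i + e j ∨ v = -e i - e j)}

/-- The positive roots of type `Cₙ`: `eᵢ - eⱼ`, `eᵢ + eⱼ` (`i < j`) and `2eᵢ`. -/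
def DeltaCpos (n : ℕ) : Set (ℕ → ℝ) :=
  {v | ∃ i j, 1 ≤ i ∧ i ≤ j ∧ j ≤ n ∧ ((i < j ∧ v = e i - e j) ∨ v = e i + e j)}

/-- A subset `Γ` of a root system `Δ` is a Heisenberg set of centre `γ`. -/
def IsHeisenbergSet {V : Type*} [AddCommGroup V] (Δ Γ : Set V) (γ : V) : Prop :=
  Γ ⊆ Δ ∧ γ ∈ Γ ∧ ∀ α ∈ Γ, α ≠ γ → ∃! α', α' ∈ Γ ∧ α + α' = γ

/-- The `i`-th row of the tableau `T(Cₙ)`: `{t_{i,j} ∣ i ≤ j ≤ 2n - i}`. -/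
def rowC (n i : ℕ) : Set (ℕ → ℝ) := {v | ∃ j, i ≤ j ∧ j ≤ 2 * n - i ∧ v = tC n i j}

/-!
Every entry of row `i` is a root `eᵢ ± eⱼ` with `j ≥ i`: `t_{i,j} = eᵢ + eⱼ` for `j ≤ n` and
`t_{i,j} = eᵢ - e_{2n-j+1}` beyond.  Since `βₖ = 2eₖ`, pairing with `βᵢ` reads off the `i`-th
coordinate and orthogonality to `βₖ` says that the `k`-th coordinate vanishes, so the conditions
defining `H_{βᵢ}` say exactly that the positive root `eₐ ± e_b` (`a ≤ b`) has `a = i`.  The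
Heisenberg property holds because `βᵢ - (eᵢ ± eⱼ) = eᵢ ∓ eⱼ` is again in the row, and a partner
`α'` with `α + α' = βᵢ` is unique in any abelian group.
-/

lemma isHeisenbergSet_iff {V : Type*} [AddCommGroup V] {Δ Γ : Set V} {γ : V} :
    IsHeisenbergSet Δ Γ γ ↔ Γ ⊆ Δ ∧ γ ∈ Γ ∧ ∀ α ∈ Γ, α ≠ γ → γ - α ∈ Γ := by
  have key : ∀ α, (∃! α', α' ∈ Γ ∧ α + α' = γ) ↔ γ - α ∈ Γ := fun α => by
    simp only [← eq_sub_iff_add_eq', and_comm]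
    exact ⟨fun ⟨_, ⟨rfl, h⟩, _⟩ => h, fun h => ⟨_, ⟨rfl, h⟩, fun _ hy => hy.1⟩⟩
  simp only [IsHeisenbergSet, key]

lemma leading_index_eq_iff {v : ℕ → ℝ} {a i : ℕ} (ha : 1 ≤ a) (hi : 1 ≤ i)
    (hlow : ∀ k, 1 ≤ k → k < a → v k = 0) (hpos : 0 < v a) :
    (0 < v i ∧ ∀ k, 1 ≤ k → k < i → v k = 0) ↔ a = i := by
  constructor
  · rintro ⟨hvi, hzero⟩
    by_contra hne
    rcases Nat.lt_or_gt_of_ne hne with h | h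
    · exact hpos.ne' (hzero a ha h)
    · exact hvi.ne' (hlow i hi h)
  · rintro rfl
    exact ⟨hpos, hlow⟩

lemma sum_Ico_alC {n a b : ℕ} (hab : a ≤ b) (hbn : b ≤ n) :
    ∑ m ∈ Finset.Ico a b, alC n m = e a - e b := by
  induction b, hab using Nat.le_induction with
  | base => simp
  | succ b hab ih =>
    rw [Finset.sum_Ico_succ_top hab, ih (by omega), alC, if_neg (by omega)]
    abel

lemma tC_of_le {n i j : ℕ} (hij : i ≤ j) (hjn : j ≤ n) : tC n i j = e i + e j := by
  rw [tC, alC, if_pos rfl]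
  split_ifs with hj
  · rw [sum_Ico_alC hij hjn, sum_Ico_alC hjn le_rfl]
    module
  · obtain rfl : j = n := by omega
    rw [show 2 * j - j = j by omega, ← Finset.Ico_add_one_right_eq_Icc,
      Finset.sum_Ico_succ_top hij, sum_Ico_alC hij le_rfl, alC, if_pos rfl]
    module

lemma tC_of_lt {n i j : ℕ} (hnj : n < j) (hj : j ≤ 2 * n - i) :
    tC n i j = e i - e (2 * n - j + 1) := by
  rw [tC, if_neg (by omega), ← Finset.Ico_add_one_right_eq_Icc,
    sum_Ico_alC (by omega) (by omega)]

lemma rowC_eq {n i : ℕ} (hin : i ≤ n) :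
    rowC n i = {v | ∃ j, i ≤ j ∧ j ≤ n ∧ ((i < j ∧ v = e i - e j) ∨ v = e i + e j)} := by
  ext v
  constructor
  · rintro ⟨j, hij, hj, rfl⟩
    by_cases hjn : j ≤ n
    · exact ⟨j, hij, hjn, .inr (tC_of_le hij hjn)⟩
    · exact ⟨2 * n - j + 1, by omega, by omega, .inl ⟨by omega, tC_of_lt (by omega) hj⟩⟩
  · rintro ⟨j, hij, hjn, ⟨hlt, rfl⟩ | rfl⟩
    · refine ⟨2 * n - j + 1, by omega, by omega, ?_⟩
      rw [tC_of_lt (by omega) (by omega), show 2 * n - (2 * n - j + 1) + 1 = j by omega]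
    · exact ⟨j, hij, by omega, (tC_of_le hij hjn).symm⟩

lemma dotN_e {n k : ℕ} (hk : k ≤ n) (v : ℕ → ℝ) : dotN n v (e k) = v k := by
  simp [dotN, e, Finset.mem_range.mpr (Nat.lt_succ_of_le hk)]

lemma dotN_add_right (n : ℕ) (v x y : ℕ → ℝ) :
    dotN n v (x + y) = dotN n v x + dotN n v y := by
  simp only [dotN, Pi.add_apply, mul_add, Finset.sum_add_distrib]

lemma dotN_tC_self {n k : ℕ} (hk : k ≤ n) (v : ℕ → ℝ) : dotN n v (tC n k k) = 2 * v k := by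
  rw [tC_of_le le_rfl hk, dotN_add_right, dotN_e hk]
  ring

lemma posRoot_leading_index_eq_iff {a b i : ℕ} (ha : 1 ≤ a) (hi : 1 ≤ i) (hab : a ≤ b)
    {v : ℕ → ℝ} (hv : (a < b ∧ v = e a - e b) ∨ v = e a + e b) :
    (0 < v i ∧ ∀ k, 1 ≤ k → k < i → v k = 0) ↔ a = i := by
  refine leading_index_eq_iff ha hi ?_ ?_ <;>
    rcases hv with ⟨hlt, rfl⟩ | rfl
  · intro k _ hk
    simp [e, hk.ne, (hk.trans hlt).ne]
  · intro k _ hk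
    simp [e, hk.ne, (hk.trans_le hab).ne]
  · simp [e, hlt.ne]
  · simp only [e, Pi.add_apply]
    split_ifs <;> norm_num

lemma rowC_eq_H {n i : ℕ} (hi : 1 ≤ i) (hin : i ≤ n) :
    rowC n i = {v ∈ DeltaCpos n | 0 < dotN n v (tC n i i) ∧
        ∀ k, 1 ≤ k → k < i → dotN n v (tC n k k) = 0} := by
  have hdot : ∀ v, (∀ k, 1 ≤ k → k < i → dotN n v (tC n k k) = 0) ↔
      ∀ k, 1 ≤ k → k < i → v k = 0 := fun v =>
    forall₂_congr fun k _ => forall_congr' fun hk => by simp [dotN_tC_self (hk.le.trans hin)]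
  ext v
  simp only [Set.mem_ofPred_eq, dotN_tC_self hin, hdot,
    mul_pos_iff_of_pos_left (two_pos : (0 : ℝ) < 2), rowC_eq hin]
  constructor
  · rintro ⟨j, hij, hjn, hv⟩
    exact ⟨⟨i, j, hi, hij, hjn, hv⟩, (posRoot_leading_index_eq_iff hi hi hij hv).mpr rfl⟩
  · rintro ⟨⟨a, b, ha, hab, hbn, hv⟩, hlead⟩
    obtain rfl := (posRoot_leading_index_eq_iff ha hi hab hv).mp hlead
    exact ⟨b, hab, hbn, hv⟩

lemma isHeisenbergSet_rowC {n i : ℕ} (hi : 1 ≤ i) (hin : i ≤ n) :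
    IsHeisenbergSet (DeltaC n) (rowC n i) (tC n i i) := by
  rw [isHeisenbergSet_iff, rowC_eq hin, tC_of_le le_rfl hin]
  refine ⟨?_, ⟨i, le_rfl, hin, .inr rfl⟩, ?_⟩
  · rintro v ⟨j, hij, hjn, ⟨hlt, rfl⟩ | rfl⟩
    · exact ⟨i, j, hi, hin, by omega, hjn, .inl ⟨hlt.ne, rfl⟩⟩
    · exact ⟨i, j, hi, hin, by omega, hjn, .inr (.inl rfl)⟩
  · rintro v ⟨j, hij, hjn, ⟨hlt, rfl⟩ | rfl⟩ hne
    · exact ⟨j, hij, hjn, .inr (by abel)⟩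
    · have hlt : i < j := lt_of_le_of_ne hij (by rintro rfl; exact hne rfl)
      exact ⟨j, hij, hjn, .inl ⟨hlt, by abel⟩⟩

theorem rowC_eq_H_and_isHeisenbergSet_general (n i : ℕ) (hi : 1 ≤ i) (hin : i ≤ n) :
    rowC n i = {v ∈ DeltaCpos n | 0 < dotN n v (tC n i i) ∧
        ∀ k, 1 ≤ k → k < i → dotN n v (tC n k k) = 0} ∧
    IsHeisenbergSet (DeltaC n) (rowC n i) (tC n i i) :=
  ⟨rowC_eq_H hi hin, isHeisenbergSet_rowC hi hin⟩

/-- In type `Cₙ`, the `i`-th row of `T(Cₙ)` equals the set `H_{βᵢ}` of positive roots `α`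
with `(α, βᵢ) > 0` lying in the subsystem orthogonal to `β₁, …, β_{i-1}`, and it is a
Heisenberg set of centre `βᵢ = t_{i,i}`. -/
theorem rowC_eq_H_and_isHeisenbergSet (n i : ℕ) (hn : 3 ≤ n) (hi : 1 ≤ i) (hin : i ≤ n) :
    rowC n i = {v ∈ DeltaCpos n | 0 < dotN n v (tC n i i) ∧
        ∀ k, 1 ≤ k → k < i → dotN n v (tC n k k) = 0} ∧
    IsHeisenbergSet (DeltaC n) (rowC n i) (tC n i i) :=
  rowC_eq_H_and_isHeisenbergSet_general n i hi hin
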